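/- Assume the Kalman condition holds and that R₃(τ) is invertible for every τ ∈ (0,T]. Then: (i) det(R₃(τ)) > 0 for every τ ∈ (0,T]; (ii) for all 0 < τ ≤ s ≤ T, the matrix R₃(τ)⁻¹ R₃(τ−s) R₃(−s)⁻¹ equals S(τ) − S(s) (where S(r) = R₃(r)⁻¹R₄(r)) and is positive semidefinite; (iii) if Hψ is a symmetric n×n matrix such that Hψ + R₃(s)⁻¹R₄(s) is positive semidefinite for every s ∈ (0,T], then R₃(s)⁻¹(R₃(s)Hψ + R₄(s)) is symmetric and positive semidefinite for every s ∈ (0,T]. -/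

import Mathlib

/-!
Since `ΩH` is a Hamiltonian matrix, the flow `e^{-τΩH}` is symplectic, so its inverse
`e^{τΩH}` can be read off from its transpose: `R₃(-τ) = -R₃(τ)ᵀ`, `R₁(-τ) = R₄(τ)ᵀ`, and the
block relations of a symplectic matrix make `S = R₃⁻¹R₄` symmetric and turn the group law
`e^{-(τ-s)ΩH} = e^{-τΩH} e^{sΩH}` into `R₃(τ)⁻¹R₃(τ-s)R₃(-s)⁻¹ = S(τ) - S(s)`.
Differentiating, `S' = -R₃⁻¹BBᵀR₃⁻ᵀ ⪯ 0`, so `S` is antitone in the Loewner order as long as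
`R₃` stays invertible, which is (ii). For `τ = s/2` the left-hand side of (ii) has determinant
`1 / det R₃(s)`, which is therefore nonnegative, hence positive: this is (i). Finally
`R₃⁻¹(R₃Hψ + R₄) = Hψ + S`, which gives (iii).
-/

open Matrix MeasureTheory Filter Topology

noncomputable section

namespace LQ

variable {n m : ℕ}

def Om (n : ℕ) : Matrix (Fin n ⊕ Fin n) (Fin n ⊕ Fin n) ℝ :=
  Matrix.fromBlocks 0 1 (-1) 0

def Ham (A Q : Matrix (Fin n) (Fin n) ℝ) (B : Matrix (Fin n) (Fin m) ℝ) :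
    Matrix (Fin n ⊕ Fin n) (Fin n ⊕ Fin n) ℝ :=
  Matrix.fromBlocks (B * Bᵀ) A Aᵀ Q

def flow (A Q : Matrix (Fin n) (Fin n) ℝ) (B : Matrix (Fin n) (Fin m) ℝ) (τ : ℝ) :
    Matrix (Fin n ⊕ Fin n) (Fin n ⊕ Fin n) ℝ :=
  NormedSpace.exp ((-τ) • (Om n * Ham A Q B))

def R1 (A Q : Matrix (Fin n) (Fin n) ℝ) (B : Matrix (Fin n) (Fin m) ℝ) (τ : ℝ) :
    Matrix (Fin n) (Fin n) ℝ := (flow A Q B τ).toBlocks₁₁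

def R2 (A Q : Matrix (Fin n) (Fin n) ℝ) (B : Matrix (Fin n) (Fin m) ℝ) (τ : ℝ) :
    Matrix (Fin n) (Fin n) ℝ := (flow A Q B τ).toBlocks₁₂

def R3 (A Q : Matrix (Fin n) (Fin n) ℝ) (B : Matrix (Fin n) (Fin m) ℝ) (τ : ℝ) :
    Matrix (Fin n) (Fin n) ℝ := (flow A Q B τ).toBlocks₂₁

def R4 (A Q : Matrix (Fin n) (Fin n) ℝ) (B : Matrix (Fin n) (Fin m) ℝ) (τ : ℝ) :
    Matrix (Fin n) (Fin n) ℝ := (flow A Q B τ).toBlocks₂₂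

def Kalman (A : Matrix (Fin n) (Fin n) ℝ) (B : Matrix (Fin n) (Fin m) ℝ) : Prop :=
  Submodule.span ℝ
    {v : Fin n → ℝ | ∃ j : Fin n, ∃ i : Fin m, v = (A ^ (j : ℕ)).mulVec (Bᵀ i)} = ⊤

end LQ

namespace Matrix

open NormedSpace

variable {l 𝔸 : Type*} [Fintype l] [DecidableEq l]
  [NormedCommRing 𝔸] [NormedAlgebra ℚ 𝔸] [CompleteSpace 𝔸]

theorem exp_mem_symplecticGroup {X : Matrix (l ⊕ l) (l ⊕ l) 𝔸}
    (hX : X * J l 𝔸 = -(J l 𝔸 * Xᵀ)) : exp X ∈ symplecticGroup l 𝔸 := by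
  have hJ : IsUnit (J l 𝔸) := (isUnit_iff_isUnit_det _).mpr (isUnit_det_J l 𝔸)
  have hXt : Xᵀ = (J l 𝔸)⁻¹ * -X * J l 𝔸 := by
    rw [Matrix.mul_assoc, Matrix.neg_mul, hX, neg_neg,
      nonsing_inv_mul_cancel_left _ _ (isUnit_det_J l 𝔸)]
  have hexp : IsUnit (exp X).det := (isUnit_iff_isUnit_det _).mp (isUnit_exp X)
  rw [SymplecticGroup.mem_iff, ← exp_transpose, hXt, exp_conj' _ _ hJ, exp_neg]
  simp only [Matrix.mul_assoc, mul_nonsing_inv_cancel_left _ _ (isUnit_det_J l 𝔸),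
    mul_nonsing_inv_cancel_left _ _ hexp]

theorem exp_J_mul_mem_symplecticGroup {H : Matrix (l ⊕ l) (l ⊕ l) 𝔸} (hH : H.IsSymm) :
    exp (J l 𝔸 * H) ∈ symplecticGroup l 𝔸 := by
  refine exp_mem_symplecticGroup ?_
  rw [transpose_mul, hH.eq, J_transpose]
  simp only [Matrix.mul_neg, neg_neg, Matrix.mul_assoc]

end Matrix

theorem HasDerivAt.ringInverse {𝕜 R : Type*} [NontriviallyNormedField 𝕜] [NormedRing R]
    [HasSummableGeomSeries R] [NormedAlgebra 𝕜 R] {f : 𝕜 → R} {f' : R} {t : 𝕜}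
    (hf : HasDerivAt f f' t)
    (ht : IsUnit (f t)) :
    HasDerivAt (fun u => Ring.inverse (f u))
      (-(Ring.inverse (f t) * f' * Ring.inverse (f t))) t := by
  obtain ⟨u, hu⟩ := ht
  have h := (hu ▸ hasFDerivAt_ringInverse (𝕜 := 𝕜) u).comp_hasDerivAt t hf
  rw [← hu, Ring.inverse_unit]
  simp only [_root_.neg_apply, ContinuousLinearMap.mulLeftRight_apply] at h
  exact h

section MatrixCalculus

-- `HasDerivAt` only sees the topology, which all matrix norms share; the operator norm is the
-- one that makes square matrices a normed algebra.
attribute [local instance] Matrix.linftyOpNormedAddCommGroup Matrix.linftyOpNormedSpace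
  Matrix.linftyOpNormedRing Matrix.linftyOpNormedAlgebra

variable {ι κ ι' κ' : Type*} [Fintype ι] [Fintype κ] [Fintype ι'] [Fintype κ']

theorem HasDerivAt.submatrix {𝕜 : Type*} [NontriviallyNormedField 𝕜] [CompleteSpace 𝕜]
    {f : 𝕜 → Matrix ι κ 𝕜} {f' : Matrix ι κ 𝕜} {t : 𝕜} (hf : HasDerivAt f f' t)
    (r : ι' → ι) (c : κ' → κ) :
    HasDerivAt (fun u => (f u).submatrix r c) (f'.submatrix r c) t :=
  let L : Matrix ι κ 𝕜 →ₗ[𝕜] Matrix ι' κ' 𝕜 :=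
    { toFun := fun M => M.submatrix r c, map_add' := fun _ _ => rfl, map_smul' := fun _ _ => rfl }
  L.toContinuousLinearMap.hasFDerivAt.comp_hasDerivAt t hf

theorem Matrix.posSemidef_sub_of_hasDerivAt {f f' : ℝ → Matrix ι ι ℝ} {a b : ℝ} (hab : a ≤ b)
    (hf : ∀ t ∈ Set.Icc a b, HasDerivAt f (f' t) t)
    (hf' : ∀ t ∈ Set.Icc a b, (-f' t).PosSemidef) (hfab : (f a - f b).IsHermitian) :
    (f a - f b).PosSemidef := by
  refine PosSemidef.of_dotProduct_mulVec_nonneg hfab fun x => ?_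
  let q : Matrix ι ι ℝ →ₗ[ℝ] ℝ :=
    { toFun := fun M => x ⬝ᵥ M *ᵥ x
      map_add' := fun M N => by simp [add_mulVec, dotProduct_add]
      map_smul' := fun c M => by simp [smul_mulVec, dotProduct_smul] }
  have hq : ∀ t ∈ Set.Icc a b, HasDerivAt (q ∘ f) (q (f' t)) t := fun t ht =>
    q.toContinuousLinearMap.hasFDerivAt.comp_hasDerivAt t (hf t ht)
  have hanti : AntitoneOn (q ∘ f) (Set.Icc a b) := by
    refine antitoneOn_of_hasDerivWithinAt_nonpos (convex_Icc a b)
      (fun t ht => (hq t ht).continuousAt.continuousWithinAt)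
      (fun t ht => (hq t (interior_subset ht)).hasDerivWithinAt) fun t ht => ?_
    simpa [q, neg_mulVec] using (hf' t (interior_subset ht)).dotProduct_mulVec_nonneg x
  simpa [q, sub_mulVec] using hanti (Set.left_mem_Icc.2 hab) (Set.right_mem_Icc.2 hab) hab

end MatrixCalculus

namespace LQ

open NormedSpace

variable {n m : ℕ} {A Q : Matrix (Fin n) (Fin n) ℝ} {B : Matrix (Fin n) (Fin m) ℝ}

theorem Om_eq_neg_J : Om n = -J (Fin n) ℝ := by
  simp [Om, J, fromBlocks_neg]

theorem isSymm_Ham (hQ : Q.IsSymm) : (Ham A Q B).IsSymm := by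
  simp [IsSymm, Ham, fromBlocks_transpose, hQ.eq]

theorem flow_eq_exp_J_mul (τ : ℝ) : flow A Q B τ = exp (J (Fin n) ℝ * (τ • Ham A Q B)) := by
  rw [flow, Om_eq_neg_J, Matrix.mul_smul, neg_smul, Matrix.neg_mul, smul_neg, neg_neg]

theorem flow_mem_symplecticGroup (hQ : Q.IsSymm) (τ : ℝ) :
    flow A Q B τ ∈ symplecticGroup (Fin n) ℝ := by
  rw [flow_eq_exp_J_mul]
  exact exp_J_mul_mem_symplecticGroup ((isSymm_Ham hQ).smul τ)

theorem flow_add (a b : ℝ) : flow A Q B (a + b) = flow A Q B a * flow A Q B b := by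
  rw [flow, flow, flow, neg_add, add_smul]
  exact Matrix.exp_add_of_commute _ _ ((Commute.refl _).smul_left _ |>.smul_right _)

theorem flow_neg (τ : ℝ) : flow A Q B (-τ) = (flow A Q B τ)⁻¹ := by
  rw [flow, flow, ← Matrix.exp_neg, ← neg_smul]

theorem flow_eq_fromBlocks (τ : ℝ) :
    flow A Q B τ = fromBlocks (R1 A Q B τ) (R2 A Q B τ) (R3 A Q B τ) (R4 A Q B τ) :=
  (fromBlocks_toBlocks _).symm

theorem flow_neg_eq_fromBlocks (hQ : Q.IsSymm) (τ : ℝ) :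
    flow A Q B (-τ) =
      fromBlocks (R4 A Q B τ)ᵀ (-(R2 A Q B τ)ᵀ) (-(R3 A Q B τ)ᵀ) (R1 A Q B τ)ᵀ := by
  rw [flow_neg, SymplecticGroup.inv_eq_symplectic_inv _ (flow_mem_symplecticGroup hQ τ),
    flow_eq_fromBlocks]
  simp [J, fromBlocks_transpose, fromBlocks_multiply, fromBlocks_neg]

theorem R1_neg (hQ : Q.IsSymm) (τ : ℝ) : R1 A Q B (-τ) = (R4 A Q B τ)ᵀ := by
  rw [R1, flow_neg_eq_fromBlocks hQ, toBlocks_fromBlocks₁₁]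

theorem R3_neg (hQ : Q.IsSymm) (τ : ℝ) : R3 A Q B (-τ) = -(R3 A Q B τ)ᵀ := by
  rw [R3, flow_neg_eq_fromBlocks hQ, toBlocks_fromBlocks₂₁]

theorem R3_sub (τ s : ℝ) :
    R3 A Q B (τ - s) = R3 A Q B τ * R1 A Q B (-s) + R4 A Q B τ * R3 A Q B (-s) := by
  rw [R3, sub_eq_add_neg, flow_add, flow_eq_fromBlocks τ, flow_eq_fromBlocks (-s),
    fromBlocks_multiply, toBlocks_fromBlocks₂₁]

theorem R1_transpose_mul_R3 (hQ : Q.IsSymm) (τ : ℝ) :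
    (R1 A Q B τ)ᵀ * R3 A Q B τ = (R3 A Q B τ)ᵀ * R1 A Q B τ :=
  (SymplecticGroup.fromBlocks_mem_iff.mp
    (flow_eq_fromBlocks τ ▸ flow_mem_symplecticGroup hQ τ)).1

theorem R1_transpose_mul_R4_sub (hQ : Q.IsSymm) (τ : ℝ) :
    (R1 A Q B τ)ᵀ * R4 A Q B τ - (R3 A Q B τ)ᵀ * R2 A Q B τ = 1 :=
  (SymplecticGroup.fromBlocks_mem_iff.mp
    (flow_eq_fromBlocks τ ▸ flow_mem_symplecticGroup hQ τ)).2.2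

theorem R3_mul_R4_transpose (hQ : Q.IsSymm) (τ : ℝ) :
    R3 A Q B τ * (R4 A Q B τ)ᵀ = R4 A Q B τ * (R3 A Q B τ)ᵀ := by
  have h := SymplecticGroup.transpose_mem (flow_mem_symplecticGroup (A := A) (B := B) hQ τ)
  rw [flow_eq_fromBlocks, fromBlocks_transpose, SymplecticGroup.fromBlocks_mem_iff] at h
  simpa using h.2.1

variable (A Q B) in
def S (r : ℝ) : Matrix (Fin n) (Fin n) ℝ := (R3 A Q B r)⁻¹ * R4 A Q B r

theorem isSymm_S (hQ : Q.IsSymm) {r : ℝ} (hr : IsUnit (R3 A Q B r)) : (S A Q B r).IsSymm := by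
  have hr' := (isUnit_iff_isUnit_det _).mp hr
  rw [IsSymm, S, transpose_mul, transpose_nonsing_inv]
  calc (R4 A Q B r)ᵀ * (R3 A Q B r)ᵀ⁻¹
      = (R3 A Q B r)⁻¹ * (R3 A Q B r * (R4 A Q B r)ᵀ) * (R3 A Q B r)ᵀ⁻¹ := by
        rw [nonsing_inv_mul_cancel_left _ _ hr']
    _ = (R3 A Q B r)⁻¹ * R4 A Q B r := by
        rw [R3_mul_R4_transpose hQ, Matrix.mul_assoc, Matrix.mul_assoc,
          mul_nonsing_inv _ (by rwa [det_transpose]), Matrix.mul_one]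

theorem R3_inv_mul_R3_sub_mul_R3_neg_inv (hQ : Q.IsSymm) {τ s : ℝ} (hτ : IsUnit (R3 A Q B τ))
    (hs : IsUnit (R3 A Q B s)) :
    (R3 A Q B τ)⁻¹ * R3 A Q B (τ - s) * (R3 A Q B (-s))⁻¹ = S A Q B τ - S A Q B s := by
  have hsT : IsUnit (R3 A Q B s)ᵀ.det := by rwa [det_transpose, ← isUnit_iff_isUnit_det]
  have hSs : (R4 A Q B s)ᵀ * (R3 A Q B s)ᵀ⁻¹ = S A Q B s := by
    rw [← transpose_nonsing_inv, ← transpose_mul]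
    exact (isSymm_S hQ hs).eq
  have hneg : (R3 A Q B (-s))⁻¹ = -(R3 A Q B s)ᵀ⁻¹ :=
    inv_eq_right_inv (by rw [R3_neg hQ, neg_mul_neg, mul_nonsing_inv _ hsT])
  rw [hneg, R3_sub, R1_neg hQ, R3_neg hQ, Matrix.mul_add,
    nonsing_inv_mul_cancel_left _ _ ((isUnit_iff_isUnit_det _).mp hτ), Matrix.add_mul]
  simp only [Matrix.mul_neg, Matrix.neg_mul, neg_neg, Matrix.mul_assoc, hSs,
    mul_nonsing_inv _ hsT, Matrix.mul_one]
  rw [S]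
  abel

theorem R2_sub_R1_mul_S (hQ : Q.IsSymm) {r : ℝ} (hr : IsUnit (R3 A Q B r)) :
    R2 A Q B r - R1 A Q B r * S A Q B r = -(R3 A Q B r)ᵀ⁻¹ := by
  have hr' := (isUnit_iff_isUnit_det _).mp hr
  have h : (R3 A Q B r)ᵀ * (R2 A Q B r - R1 A Q B r * S A Q B r) = -1 := by
    rw [Matrix.mul_sub, ← Matrix.mul_assoc, ← R1_transpose_mul_R3 hQ, Matrix.mul_assoc, S,
      mul_nonsing_inv_cancel_left _ _ hr', ← R1_transpose_mul_R4_sub hQ r]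
    abel
  have hinv := inv_eq_right_inv (A := (R3 A Q B r)ᵀ)
    (B := -(R2 A Q B r - R1 A Q B r * S A Q B r)) (by rw [Matrix.mul_neg, h, neg_neg])
  rw [hinv, neg_neg]

section Calculus

attribute [local instance] Matrix.linftyOpNormedAddCommGroup Matrix.linftyOpNormedSpace
  Matrix.linftyOpNormedRing Matrix.linftyOpNormedAlgebra

theorem hasDerivAt_flow (τ : ℝ) :
    HasDerivAt (flow A Q B) (-(Om n * Ham A Q B) * flow A Q B τ) τ := by
  have h : flow A Q B = fun u => exp (u • -(Om n * Ham A Q B)) := by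
    ext1 u
    rw [flow, smul_neg, neg_smul]
  rw [h]
  exact hasDerivAt_exp_smul_const' (-(Om n * Ham A Q B)) τ

theorem hasDerivAt_R3 (τ : ℝ) :
    HasDerivAt (R3 A Q B) (B * Bᵀ * R1 A Q B τ + A * R3 A Q B τ) τ := by
  refine ((hasDerivAt_flow τ).submatrix Sum.inr Sum.inl).congr_deriv ?_
  change (-(Om n * Ham A Q B) * flow A Q B τ).toBlocks₂₁ = _
  simp [flow_eq_fromBlocks τ, Om, Ham, fromBlocks_multiply, fromBlocks_neg]

theorem hasDerivAt_R4 (τ : ℝ) :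
    HasDerivAt (R4 A Q B) (B * Bᵀ * R2 A Q B τ + A * R4 A Q B τ) τ := by
  refine ((hasDerivAt_flow τ).submatrix Sum.inr Sum.inr).congr_deriv ?_
  change (-(Om n * Ham A Q B) * flow A Q B τ).toBlocks₂₂ = _
  simp [flow_eq_fromBlocks τ, Om, Ham, fromBlocks_multiply, fromBlocks_neg]

theorem hasDerivAt_S (hQ : Q.IsSymm) {τ : ℝ} (hτ : IsUnit (R3 A Q B τ)) :
    HasDerivAt (S A Q B) (-((R3 A Q B τ)⁻¹ * (B * Bᵀ) * (R3 A Q B τ)⁻¹ᵀ)) τ := by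
  have hS : S A Q B = fun u => Ring.inverse (R3 A Q B u) * R4 A Q B u := by
    ext1 u
    rw [S, nonsing_inv_eq_ringInverse]
  rw [hS]
  refine (((hasDerivAt_R3 τ).ringInverse hτ).mul (hasDerivAt_R4 τ)).congr_deriv ?_
  rw [← nonsing_inv_eq_ringInverse]
  set C := (R3 A Q B τ)⁻¹
  calc -(C * (B * Bᵀ * R1 A Q B τ + A * R3 A Q B τ) * C) * R4 A Q B τ
        + C * (B * Bᵀ * R2 A Q B τ + A * R4 A Q B τ)
      = C * (B * Bᵀ) * (R2 A Q B τ - R1 A Q B τ * S A Q B τ)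
        + C * A * (R4 A Q B τ - R3 A Q B τ * S A Q B τ) := by
        rw [S]
        noncomm_ring
    _ = -(C * (B * Bᵀ) * Cᵀ) := by
        rw [R2_sub_R1_mul_S hQ hτ, S, mul_nonsing_inv_cancel_left _ _
          ((isUnit_iff_isUnit_det _).mp hτ), sub_self, transpose_nonsing_inv]
        simp

theorem posSemidef_S_sub (hQ : Q.IsSymm) {τ s : ℝ} (hτs : τ ≤ s)
    (hU : ∀ u ∈ Set.Icc τ s, IsUnit (R3 A Q B u)) : (S A Q B τ - S A Q B s).PosSemidef := by
  refine posSemidef_sub_of_hasDerivAt hτs (fun u hu => hasDerivAt_S hQ (hU u hu)) (fun u _ => ?_)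
    (isHermitian_iff_isSymm.mpr ((isSymm_S hQ (hU τ ⟨le_rfl, hτs⟩)).sub
      (isSymm_S hQ (hU s ⟨hτs, le_rfl⟩))))
  simpa [conjTranspose_eq_transpose_of_trivial, transpose_mul, Matrix.mul_assoc] using
    posSemidef_self_mul_conjTranspose ((R3 A Q B u)⁻¹ * B)

end Calculus

theorem det_R3_pos (hQ : Q.IsSymm) {s : ℝ} (hs : 0 < s)
    (hU : ∀ u ∈ Set.Icc (s / 2) s, IsUnit (R3 A Q B u)) : 0 < (R3 A Q B s).det := by
  have hhalf : s / 2 ≤ s := by linarith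
  have hdet := (posSemidef_S_sub hQ hhalf hU).det_nonneg
  rw [← R3_inv_mul_R3_sub_mul_R3_neg_inv hQ (hU _ ⟨le_rfl, hhalf⟩) (hU _ ⟨hhalf, le_rfl⟩),
    show s / 2 - s = -(s / 2) by ring, R3_neg hQ, R3_neg hQ] at hdet
  have h2 := ((isUnit_iff_isUnit_det _).mp (hU _ ⟨le_rfl, hhalf⟩)).ne_zero
  have h1 := ((isUnit_iff_isUnit_det _).mp (hU _ ⟨hhalf, le_rfl⟩)).ne_zero
  simp only [det_mul, det_nonsing_inv, det_neg, det_transpose, Ring.inverse_eq_inv'] at hdet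
  field_simp at hdet
  exact (one_div_nonneg.mp hdet).lt_of_ne' h1

theorem R3_inv_mul_R3_mul_add_R4 {s : ℝ} (hs : IsUnit (R3 A Q B s))
    (H : Matrix (Fin n) (Fin n) ℝ) :
    (R3 A Q B s)⁻¹ * (R3 A Q B s * H + R4 A Q B s) = H + S A Q B s := by
  rw [Matrix.mul_add, nonsing_inv_mul_cancel_left _ _ ((isUnit_iff_isUnit_det _).mp hs), S]

theorem positivity_lemma_general
    {n m : ℕ}
    (A Q : Matrix (Fin n) (Fin n) ℝ) (B : Matrix (Fin n) (Fin m) ℝ)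
    (hQ : Q.IsSymm) (T : ℝ)
    (hR3 : ∀ τ ∈ Set.Ioc 0 T, IsUnit (R3 A Q B τ)) :
    letI S : ℝ → Matrix (Fin n) (Fin n) ℝ := fun r => (R3 A Q B r)⁻¹ * R4 A Q B r
    (∀ τ ∈ Set.Ioc (0:ℝ) T, 0 < (R3 A Q B τ).det) ∧
    (∀ τ s : ℝ, 0 < τ → τ ≤ s → s ≤ T →
      (R3 A Q B τ)⁻¹ * R3 A Q B (τ - s) * (R3 A Q B (-s))⁻¹ = S τ - S s ∧
      ((R3 A Q B τ)⁻¹ * R3 A Q B (τ - s) * (R3 A Q B (-s))⁻¹).PosSemidef) ∧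
    (∀ Hψ : Matrix (Fin n) (Fin n) ℝ, Hψ.IsSymm →
      (∀ s ∈ Set.Ioc (0:ℝ) T, (Hψ + (R3 A Q B s)⁻¹ * R4 A Q B s).PosSemidef) →
      ∀ s ∈ Set.Ioc (0:ℝ) T,
        ((R3 A Q B s)⁻¹ * (R3 A Q B s * Hψ + R4 A Q B s)).IsSymm ∧
        ((R3 A Q B s)⁻¹ * (R3 A Q B s * Hψ + R4 A Q B s)).PosSemidef) := by
  have hU : ∀ {τ s}, 0 < τ → s ≤ T → ∀ u ∈ Set.Icc τ s, IsUnit (R3 A Q B u) :=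
    fun hτ hsT u hu => hR3 u ⟨hτ.trans_le hu.1, hu.2.trans hsT⟩
  refine ⟨fun s hs => det_R3_pos hQ hs.1 (hU (half_pos hs.1) hs.2),
    fun τ s hτ hτs hsT => ?_, fun Hψ hψ hpsd s hs => ?_⟩
  · have hS := R3_inv_mul_R3_sub_mul_R3_neg_inv hQ (hU hτ hsT τ ⟨le_rfl, hτs⟩)
      (hU hτ hsT s ⟨hτs, le_rfl⟩)
    exact ⟨hS, hS ▸ posSemidef_S_sub hQ hτs (hU hτ hsT)⟩
  · rw [R3_inv_mul_R3_mul_add_R4 (hR3 s hs)]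
    exact ⟨hψ.add (isSymm_S hQ (hR3 s hs)), hpsd s hs⟩

/-- Positivity lemma: (i) `det R₃(τ) > 0` on `(0,T]`; (ii) for `0 < τ ≤ s ≤ T` the matrix
`R₃(τ)⁻¹R₃(τ−s)R₃(−s)⁻¹` equals `S(τ) − S(s)` and is positive semidefinite; (iii) if
`Hψ` is symmetric with `Hψ + R₃(s)⁻¹R₄(s) ⪰ 0` for all `s ∈ (0,T]`, then
`R₃(s)⁻¹(R₃(s)Hψ + R₄(s))` is symmetric positive semidefinite for all `s ∈ (0,T]`. -/
theorem positivity_lemma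
    {n m : ℕ} (hm : 1 ≤ m) (hmn : m ≤ n)
    (A Q : Matrix (Fin n) (Fin n) ℝ) (B : Matrix (Fin n) (Fin m) ℝ)
    (hQ : Q.IsSymm) (hB : B.rank = m)
    (T : ℝ) (hT : 0 < T) (hKal : Kalman A B)
    (hR3 : ∀ τ ∈ Set.Ioc 0 T, IsUnit (R3 A Q B τ)) :
    letI S : ℝ → Matrix (Fin n) (Fin n) ℝ := fun r => (R3 A Q B r)⁻¹ * R4 A Q B r
    (∀ τ ∈ Set.Ioc (0:ℝ) T, 0 < (R3 A Q B τ).det) ∧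
    (∀ τ s : ℝ, 0 < τ → τ ≤ s → s ≤ T →
      (R3 A Q B τ)⁻¹ * R3 A Q B (τ - s) * (R3 A Q B (-s))⁻¹ = S τ - S s ∧
      ((R3 A Q B τ)⁻¹ * R3 A Q B (τ - s) * (R3 A Q B (-s))⁻¹).PosSemidef) ∧
    (∀ Hψ : Matrix (Fin n) (Fin n) ℝ, Hψ.IsSymm →
      (∀ s ∈ Set.Ioc (0:ℝ) T, (Hψ + (R3 A Q B s)⁻¹ * R4 A Q B s).PosSemidef) →
      ∀ s ∈ Set.Ioc (0:ℝ) T,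
        ((R3 A Q B s)⁻¹ * (R3 A Q B s * Hψ + R4 A Q B s)).IsSymm ∧
        ((R3 A Q B s)⁻¹ * (R3 A Q B s * Hψ + R4 A Q B s)).PosSemidef) :=
  positivity_lemma_general A Q B hQ T hR3

end LQ
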